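/- Let R be an integral domain. Then every Ratliff-Rush closed ideal of R is an upper big ideal of R. -/
import Mathlib


/-- An ideal `I` of a commutative ring `R` is an *upper big ideal* if whenever `I ⊊ J`,
`I ^ n ⊊ J ^ n` for every positive integer `n`. -/
def Ideal.IsUpperBig {R : Type*} [CommRing R] (I : Ideal R) : Prop :=
  ∀ J : Ideal R, I < J → ∀ n : ℕ, 1 ≤ n → I ^ n < J ^ n

/-- **Proposition 2.5.** In an integral domain, every Ratliff–Rush closed ideal
(an ideal `I` with `I = I* = {x : x·Iⁿ ⊆ Iⁿ⁺¹ for some n ≥ 1}`) is an upper big ideal. -/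
theorem isUpperBig_of_ratliffRushClosed (R : Type*) [CommRing R] [IsDomain R] (I : Ideal R)
    (hRR : ∀ x : R, (∃ n : ℕ, 1 ≤ n ∧ ∀ y ∈ I ^ n, x * y ∈ I ^ (n + 1)) → x ∈ I) :
    I.IsUpperBig := by
  intro J hIJ n hn
  obtain ⟨x, hxJ, hxI⟩ := SetLike.exists_of_lt hIJ
  have hle : I ^ n ≤ J ^ n := Ideal.pow_right_mono hIJ.le n
  refine lt_of_le_of_ne hle (fun heq => hxI ?_)
  rcases eq_or_lt_of_le hn with h1 | h2
  · -- n = 1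
    have : I = J := by
      have := heq
      rw [← h1, pow_one, pow_one] at this
      exact this
    exact (hIJ.ne this).elim
  · -- n ≥ 2
    obtain ⟨m, hm⟩ : ∃ m, n = m + 1 := ⟨n - 1, (Nat.succ_pred_eq_of_pos (by omega)).symm⟩
    have hm1 : 1 ≤ m := by omega
    refine hRR x ⟨m, hm1, fun y hy => ?_⟩
    have hyJ : y ∈ J ^ m := Ideal.pow_right_mono hIJ.le m hy
    have : x * y ∈ J ^ (m + 1) := by
      rw [pow_succ']
      exact Ideal.mul_mem_mul hxJ hyJ
    rw [← hm] at this ⊢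
    rw [heq]
    exact this
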